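/- For every closed linear λ-term M there exists an n ≥ 0 such that M I I … I (M applied to n copies of the identity I) β-reduces in finitely many steps to I. -/

import Mathlib

/-!
Core development: untyped λ-terms in de Bruijn representation, linearity,
β- and η-reduction, as in the paper "A type-assignment of linear erasure
and duplication" (Curzi, Roversi).
-/

namespace LEMPaper

/-- Untyped λ-terms, de Bruijn representation. -/
inductive Lam : Type
  | var : ℕ → Lam
  | app : Lam → Lam → Lam
  | lam : Lam → Lam
  deriving DecidableEq

namespace Lam

/-- Lift a renaming under a binder. -/
def liftRen (ρ : ℕ → ℕ) : ℕ → ℕ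
  | 0 => 0
  | n + 1 => ρ n + 1

/-- Apply a renaming of free variables. -/
def rename (ρ : ℕ → ℕ) : Lam → Lam
  | var n => var (ρ n)
  | app M N => app (M.rename ρ) (N.rename ρ)
  | lam M => lam (M.rename (liftRen ρ))

/-- Shift all free variables up by one. -/
def shift (M : Lam) : Lam := M.rename Nat.succ

/-- Lift a simultaneous substitution under a binder. -/
def liftSub (s : ℕ → Lam) : ℕ → Lam
  | 0 => var 0
  | n + 1 => (s n).shift

/-- Simultaneous (capture-avoiding) substitution. -/
def substAll (s : ℕ → Lam) : Lam → Lam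
  | var n => s n
  | app M N => app (M.substAll s) (N.substAll s)
  | lam M => lam (M.substAll (liftSub s))

/-- Capture-avoiding substitution `M[N/n]`; the variables above `n` are decremented. -/
def subst (M : Lam) (n : ℕ) (N : Lam) : Lam :=
  M.substAll (fun m => if m < n then var m else if m = n then N else var (m - 1))

/-- Number of (free) occurrences of the variable `n` in a term. -/
def countFree : Lam → ℕ → ℕ
  | var m, n => if m = n then 1 else 0
  | app M N, n => M.countFree n + N.countFree n
  | lam M, n => M.countFree (n + 1)

/-- A term is closed when it has no free variables. -/
def Closed (M : Lam) : Prop := ∀ n, M.countFree n = 0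

/-- A λ-term is linear if all of its free variables occur exactly once in it and
every abstraction binds a variable occurring exactly once in its (linear) body. -/
def Linear : Lam → Prop
  | var _ => True
  | app M N => M.Linear ∧ N.Linear ∧ ∀ n, M.countFree n = 0 ∨ N.countFree n = 0
  | lam M => M.Linear ∧ M.countFree 0 = 1

/-- The identity combinator `I = λx.x`. -/
def I : Lam := lam (var 0)

/-- The linear pairing `⟨M,N⟩ = λz. z M N`. -/
def pair (M N : Lam) : Lam := lam (app (app (var 0) M.shift) N.shift)

/-- The size (number of nodes of the syntax tree) of a term. -/
def size : Lam → ℕ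
  | var _ => 1
  | app M N => M.size + N.size + 1
  | lam M => M.size + 1

/-- One-step β-reduction, closed under arbitrary contexts. -/
inductive Beta : Lam → Lam → Prop
  | beta (M N : Lam) : Beta (app (lam M) N) (M.subst 0 N)
  | appL {M M'} (N : Lam) : Beta M M' → Beta (app M N) (app M' N)
  | appR (M : Lam) {N N'} : Beta N N' → Beta (app M N) (app M N')
  | lam {M M'} : Beta M M' → Beta (lam M) (lam M')

/-- One-step η-reduction `λx.Mx →η M` (x not free in M), closed under contexts. -/
inductive Eta : Lam → Lam → Prop
  | eta (M : Lam) : Eta (lam (app M.shift (var 0))) M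
  | appL {M M'} (N : Lam) : Eta M M' → Eta (app M N) (app M' N)
  | appR (M : Lam) {N N'} : Eta N N' → Eta (app M N) (app M N')
  | lam {M M'} : Eta M M' → Eta (lam M) (lam M')

/-- One-step βη-reduction. -/
def BetaEta (M N : Lam) : Prop := Beta M N ∨ Eta M N

/-- A value is a closed linear λ-term in β-normal form. -/
def IsValue (V : Lam) : Prop := V.Linear ∧ V.Closed ∧ ∀ W, ¬ Beta V W

end Lam

end LEMPaper

namespace LEMPaper

/-- `appI M n` is the application `M I I … I` of `M` to `n` copies of the identity `I`. -/
def appI : Lam → ℕ → Lam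
  | M, 0 => M
  | M, n + 1 => Lam.app (appI M n) Lam.I

/-!
β-reducing a linear term erases exactly one application, so a closed linear term reduces to a
β-normal form, and a closed β-normal term is an abstraction `λx.B`. If `B = x` it is `I`.
Otherwise `(λx.B) I →β B[I/x]` keeps the number of applications and removes the abstraction
`λx.B`, while substituting `I` creates no abstraction other than copies of `I`. So the number of
applications, and lexicographically after it the number of abstractions other than `I`,
decreases along the way from `M I … I` to `I`.
-/
namespace Lam

def numApps : Lam → ℕ
  | var _ => 0
  | app M N => M.numApps + N.numApps + 1
  | lam M => M.numApps

/-- In de Bruijn notation the abstraction `lam (var 0)` is `I`. -/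
def numNonIdAbs : Lam → ℕ
  | var _ => 0
  | app M N => M.numNonIdAbs + N.numNonIdAbs
  | lam M => M.numNonIdAbs + if M = var 0 then 0 else 1

theorem liftRen_strictMono {ρ : ℕ → ℕ} (hρ : StrictMono ρ) : StrictMono (liftRen ρ) := by
  intro a b hab
  match a, b with
  | _, 0 => omega
  | 0, b + 1 => simp [liftRen]
  | a + 1, b + 1 => simpa [liftRen] using hρ (show a < b by omega)

theorem liftRen_eq_zero_iff (ρ : ℕ → ℕ) (m : ℕ) : liftRen ρ m = 0 ↔ m = 0 := by
  cases m <;> simp [liftRen]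

theorem countFree_rename_apply (M : Lam) {ρ : ℕ → ℕ} (hρ : StrictMono ρ) (n : ℕ) :
    (M.rename ρ).countFree (ρ n) = M.countFree n := by
  induction M generalizing ρ n with
  | var m => simp [rename, countFree, hρ.injective.eq_iff]
  | app P Q ihP ihQ => simp [rename, countFree, ihP hρ, ihQ hρ]
  | lam P ih => exact ih (liftRen_strictMono hρ) (n + 1)

theorem countFree_rename_of_notMem_range (M : Lam) {ρ : ℕ → ℕ} {k : ℕ} (hk : ∀ m, ρ m ≠ k) :
    (M.rename ρ).countFree k = 0 := by
  induction M generalizing ρ k with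
  | var m => simp [rename, countFree, hk m]
  | app P Q ihP ihQ => simp [rename, countFree, ihP hk, ihQ hk]
  | lam P ih =>
    refine ih fun m => ?_
    cases m with
    | zero => simp [liftRen]
    | succ m => simpa [liftRen] using hk m

theorem Linear.rename {M : Lam} (hM : M.Linear) {ρ : ℕ → ℕ} (hρ : StrictMono ρ) :
    (M.rename ρ).Linear := by
  induction M generalizing ρ with
  | var m => trivial
  | app P Q ihP ihQ =>
    obtain ⟨hP, hQ, hdisj⟩ := hM
    refine ⟨ihP hP hρ, ihQ hQ hρ, fun n => ?_⟩
    by_cases hn : ∃ m, ρ m = n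
    · obtain ⟨m, rfl⟩ := hn
      rw [countFree_rename_apply P hρ, countFree_rename_apply Q hρ]
      exact hdisj m
    · push Not at hn
      exact Or.inl (countFree_rename_of_notMem_range P hn)
  | lam P ih =>
    obtain ⟨hP, hc⟩ := hM
    exact ⟨ih hP (liftRen_strictMono hρ), countFree_rename_apply P (liftRen_strictMono hρ) 0 ▸ hc⟩

theorem numApps_rename (M : Lam) (ρ : ℕ → ℕ) : (M.rename ρ).numApps = M.numApps := by
  induction M generalizing ρ with
  | var m => rfl
  | app P Q ihP ihQ => simp [rename, numApps, ihP, ihQ]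
  | lam P ih => simp [rename, numApps, ih]

theorem rename_eq_var_zero_iff {ρ : ℕ → ℕ} (hρ : ∀ m, ρ m = 0 ↔ m = 0) (M : Lam) :
    M.rename ρ = var 0 ↔ M = var 0 := by
  cases M <;> simp [rename, hρ]

theorem numNonIdAbs_rename (M : Lam) (ρ : ℕ → ℕ) : (M.rename ρ).numNonIdAbs = M.numNonIdAbs := by
  induction M generalizing ρ with
  | var m => rfl
  | app P Q ihP ihQ => simp [rename, numNonIdAbs, ihP, ihQ]
  | lam P ih => simp [rename, numNonIdAbs, ih, rename_eq_var_zero_iff (liftRen_eq_zero_iff ρ)]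

theorem countFree_shift_succ (M : Lam) (n : ℕ) : M.shift.countFree (n + 1) = M.countFree n :=
  countFree_rename_apply M (fun _ _ => Nat.succ_lt_succ) n

theorem countFree_shift_zero (M : Lam) : M.shift.countFree 0 = 0 :=
  countFree_rename_of_notMem_range M Nat.succ_ne_zero

theorem Linear.shift {M : Lam} (hM : M.Linear) : M.shift.Linear :=
  hM.rename fun _ _ => Nat.succ_lt_succ

theorem numApps_shift (M : Lam) : M.shift.numApps = M.numApps := numApps_rename M _

theorem numNonIdAbs_shift (M : Lam) : M.shift.numNonIdAbs = M.numNonIdAbs :=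
  numNonIdAbs_rename M _

theorem shift_ne_var_zero (M : Lam) : M.shift ≠ var 0 := by
  cases M <;> simp [shift, rename]

theorem subst_var (m n : ℕ) (N : Lam) :
    (var m).subst n N = if m < n then var m else if m = n then N else var (m - 1) := rfl

theorem subst_app (P Q : Lam) (n : ℕ) (N : Lam) :
    (app P Q).subst n N = app (P.subst n N) (Q.subst n N) := rfl

theorem substAll_congr (M : Lam) {s t : ℕ → Lam} (h : ∀ n, s n = t n) :
    M.substAll s = M.substAll t := by
  induction M generalizing s t with
  | var m => exact h m
  | app P Q ihP ihQ => simp [substAll, ihP h, ihQ h]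
  | lam P ih =>
    refine congrArg lam (ih fun m => ?_)
    cases m with
    | zero => rfl
    | succ m => simp [liftSub, h m]

theorem subst_lam (M : Lam) (n : ℕ) (N : Lam) :
    (lam M).subst n N = lam (M.subst (n + 1) N.shift) := by
  refine congrArg lam (substAll_congr M fun m => ?_)
  rcases m with _ | m
  · rfl
  · rcases Nat.lt_trichotomy m n with h | rfl | h
    · simp [liftSub, h, shift, rename]
    · simp [liftSub]
    · simp only [liftSub, if_neg (show ¬m < n by omega), if_neg (show m ≠ n by omega),
        if_neg (show ¬m + 1 < n + 1 by omega), if_neg (show m + 1 ≠ n + 1 by omega)]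
      simp only [shift, rename, var.injEq]
      omega

theorem countFree_subst (M : Lam) (n : ℕ) (N : Lam) (k : ℕ) :
    (M.subst n N).countFree k =
      M.countFree (if k < n then k else k + 1) + M.countFree n * N.countFree k := by
  induction M generalizing n N k with
  | var m =>
    rw [subst_var]
    split_ifs <;> simp only [countFree] <;> split_ifs <;> omega
  | app P Q ihP ihQ =>
    simp only [subst_app, countFree, ihP, ihQ]
    ring
  | lam P ih =>
    simp only [subst_lam, countFree, ih, countFree_shift_succ]
    congr 2
    split_ifs <;> omega

theorem numApps_subst (M : Lam) (n : ℕ) (N : Lam) :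
    (M.subst n N).numApps = M.numApps + M.countFree n * N.numApps := by
  induction M generalizing n N with
  | var m =>
    rw [subst_var]
    split_ifs <;> simp only [numApps, countFree] <;> split_ifs <;> omega
  | app P Q ihP ihQ =>
    simp only [subst_app, numApps, countFree, ihP, ihQ]
    ring
  | lam P ih => simp only [subst_lam, numApps, countFree, ih, numApps_shift]

theorem subst_eq_var_zero_iff {n : ℕ} (hn : 0 < n) {N : Lam} (hN : N ≠ var 0) (M : Lam) :
    M.subst n N = var 0 ↔ M = var 0 := by
  cases M with
  | var m =>
    rw [subst_var]
    split_ifs <;> simp_all <;> omega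
  | app P Q => simp [subst_app]
  | lam P => simp [subst_lam]

theorem numNonIdAbs_subst (M : Lam) (n : ℕ) (N : Lam) :
    (M.subst n N).numNonIdAbs = M.numNonIdAbs + M.countFree n * N.numNonIdAbs := by
  induction M generalizing n N with
  | var m =>
    rw [subst_var]
    split_ifs <;> simp only [numNonIdAbs, countFree] <;> split_ifs <;> omega
  | app P Q ihP ihQ =>
    simp only [subst_app, numNonIdAbs, countFree, ihP, ihQ]
    ring
  | lam P ih =>
    simp only [subst_lam, numNonIdAbs, countFree, ih, numNonIdAbs_shift,
      subst_eq_var_zero_iff n.succ_pos (shift_ne_var_zero N)]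
    ring

theorem Linear.subst {M N : Lam} (hM : M.Linear) (hN : N.Linear) {n : ℕ}
    (hn : M.countFree n ≤ 1)
    (hdisj : ∀ k, M.countFree (if k < n then k else k + 1) = 0 ∨ N.countFree k = 0) :
    (M.subst n N).Linear := by
  induction M generalizing n N with
  | var m =>
    rw [subst_var]
    split_ifs
    exacts [trivial, hN, trivial]
  | app P Q ihP ihQ =>
    obtain ⟨hP, hQ, hPQ⟩ := hM
    simp only [countFree] at hn hdisj
    rw [subst_app]
    refine ⟨ihP hP hN (by omega) fun k => ?_, ihQ hQ hN (by omega) fun k => ?_, fun k => ?_⟩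
    · exact (hdisj k).imp_left (by omega)
    · exact (hdisj k).imp_left (by omega)
    · rw [countFree_subst, countFree_subst]
      rcases hdisj k with h | h
      · rcases hPQ n with h' | h' <;> rw [h'] <;> omega
      · rcases hPQ (if k < n then k else k + 1) with h' | h' <;> simp [h, h']
  | lam P ih =>
    obtain ⟨hP, hP0⟩ := hM
    rw [subst_lam]
    refine ⟨ih hP hN.shift hn fun k => ?_, ?_⟩
    · cases k with
      | zero => exact Or.inr (countFree_shift_zero N)
      | succ j =>
        rw [countFree_shift_succ]
        refine (hdisj j).imp_left fun h => ?_
        simp only [countFree] at h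
        split_ifs at h ⊢ <;> omega
    · simpa [countFree_subst, countFree_shift_zero] using hP0

section Beta

variable {M M' : Lam}

theorem Beta.countFree_eq (h : Beta M M') (hM : M.Linear) (k : ℕ) :
    M'.countFree k = M.countFree k := by
  induction h generalizing k with
  | beta B Q =>
    obtain ⟨⟨_, hB0⟩, _⟩ := hM
    simp only [countFree_subst, countFree, hB0]
    split_ifs <;> omega
  | appL Q _ ih => simp only [countFree, ih hM.1]
  | appR P _ ih => simp only [countFree, ih hM.2.1]
  | lam _ ih => simp only [countFree, ih hM.1]

theorem Beta.closed (h : Beta M M') (hM : M.Linear) (hc : M.Closed) : M'.Closed :=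
  fun k => (h.countFree_eq hM k).trans (hc k)

theorem Beta.linear (h : Beta M M') (hM : M.Linear) : M'.Linear := by
  induction h with
  | beta B Q =>
    obtain ⟨⟨hB, hB0⟩, hQ, hdisj⟩ := hM
    exact hB.subst hQ hB0.le fun k => by simpa [countFree] using hdisj k
  | appL Q h ih =>
    obtain ⟨hP, hQ, hdisj⟩ := hM
    exact ⟨ih hP, hQ, fun n => h.countFree_eq hP n ▸ hdisj n⟩
  | appR P h ih =>
    obtain ⟨hP, hQ, hdisj⟩ := hM
    exact ⟨hP, ih hQ, fun n => h.countFree_eq hQ n ▸ hdisj n⟩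
  | lam h ih =>
    obtain ⟨hP, hP0⟩ := hM
    exact ⟨ih hP, h.countFree_eq hP 0 ▸ hP0⟩

theorem Beta.numApps_add_one (h : Beta M M') (hM : M.Linear) : M'.numApps + 1 = M.numApps := by
  induction h with
  | beta B Q =>
    obtain ⟨⟨_, hB0⟩, _⟩ := hM
    simp [numApps_subst, numApps, hB0]
  | appL Q _ ih => simp only [numApps, ← ih hM.1]; omega
  | appR P _ ih => simp only [numApps, ← ih hM.2.1]; omega
  | lam _ ih => exact ih hM.1

theorem Closed.exists_eq_lam_of_normal (hc : M.Closed) (hnf : ∀ M', ¬ Beta M M') :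
    ∃ B, M = lam B := by
  induction M with
  | var m => simpa [countFree] using hc m
  | app P Q ihP _ =>
    obtain ⟨B, rfl⟩ := ihP (fun n => (Nat.add_eq_zero_iff.mp (hc n)).1)
      fun P' h => hnf _ (h.appL Q)
    exact (hnf _ (Beta.beta B Q)).elim
  | lam B _ => exact ⟨B, rfl⟩

theorem Beta.appI (h : Beta M M') (n : ℕ) : Beta (appI M n) (appI M' n) := by
  induction n with
  | zero => exact h
  | succ n ih => exact ih.appL I

end Beta

theorem Linear.app_I {M : Lam} (hM : M.Linear) : (app M I).Linear :=
  ⟨hM, ⟨trivial, rfl⟩, fun _ => Or.inr (by simp [I, countFree])⟩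

theorem Closed.app_I {M : Lam} (hc : M.Closed) : (app M I).Closed :=
  fun k => by simpa [I, countFree] using hc k

end Lam

theorem appI_app_I (M : Lam) (n : ℕ) : appI (Lam.app M Lam.I) n = appI M (n + 1) := by
  induction n with
  | zero => rfl
  | succ n ih => rw [appI, ih]; rfl

/-- Lemma 2.1, Mackie/Mairson: for every closed linear λ-term `M`
there exists `n ≥ 0` such that `M I I … I` (with `n` identities) β-reduces to `I`. -/
theorem closed_linear_term_erases_to_identity
    (M : Lam) (hlin : M.Linear) (hcl : M.Closed) :
    ∃ n : ℕ, Relation.ReflTransGen Lam.Beta (appI M n) Lam.I := by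
  by_cases hred : ∃ M', Lam.Beta M M'
  · obtain ⟨M', hstep⟩ := hred
    have hdec := hstep.numApps_add_one hlin
    obtain ⟨n, hn⟩ :=
      closed_linear_term_erases_to_identity M' (hstep.linear hlin) (hstep.closed hlin hcl)
    exact ⟨n, .head (hstep.appI n) hn⟩
  · push Not at hred
    obtain ⟨B, rfl⟩ := hcl.exists_eq_lam_of_normal hred
    by_cases hB : B = .var 0
    · exact ⟨0, hB ▸ .refl⟩
    have hstep := Lam.Beta.beta B Lam.I
    have hApps : (B.subst 0 Lam.I).numApps = (Lam.lam B).numApps := by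
      simp [Lam.numApps_subst, Lam.I, Lam.numApps]
    have hAbs : (B.subst 0 Lam.I).numNonIdAbs < (Lam.lam B).numNonIdAbs := by
      simp [Lam.numNonIdAbs_subst, Lam.I, Lam.numNonIdAbs, hB]
    obtain ⟨n, hn⟩ := closed_linear_term_erases_to_identity (B.subst 0 Lam.I)
      (hstep.linear hlin.app_I) (hstep.closed hlin.app_I hcl.app_I)
    exact ⟨n + 1, appI_app_I _ n ▸ .head (hstep.appI n) hn⟩
termination_by (M.numApps, M.numNonIdAbs)
decreasing_by
  all_goals subst_vars
  · exact Prod.Lex.left _ _ (by omega)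
  · rw [hApps]
    exact Prod.Lex.right _ hAbs

end LEMPaper
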